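/- arXiv:1307.6692 — 2 statements merged into one kernel-verified Lean document; each statement's English description precedes it below -/
import Mathlib

section
/- The matrix p is primitive if and only if the restriction of p̃ to the set of arcs E = {(i,j) : p_{ij} > 0} is primitive. -/
/-!
A walk of length `m + 1` in the arc graph from the arc `(i, j)` to the arc `(k, l)` is a walk
of length `m` from `j` to `k` in the graph of `p`, followed by the arc `(k, l)`; on the level of
weights, `(p̃ ^ (m + 1)) (i, j) (k, l) = (p ^ m) j k * p k l`. Hence `p ^ m > 0` gives
`p̃ ^ (m + 1) > 0` on arcs. Conversely, since every row of `p` has a positive entry, any two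
vertices `i`, `j` start arcs `(i, l)`, `(j, l')`, and `p̃ ^ (m + 1) > 0` forces `(p ^ m) l j > 0`,
whence `(p ^ (m + 1)) i j ≥ p i l * (p ^ m) l j > 0`.
-/

namespace Matrix

variable {ι R : Type*} [DecidableEq ι]

/-- The matrix `p̃` restricted to the arcs satisfying `S`. -/
def arcMatrix [Zero R] (A : Matrix ι ι R) (S : ι × ι → Prop) :
    Matrix {e // S e} {e // S e} R :=
  fun a b => if b.1.1 = a.1.2 then A a.1.2 b.1.2 else 0

theorem arcMatrix_nonneg [Zero R] [Preorder R] {A : Matrix ι ι R} (hA : ∀ i j, 0 ≤ A i j)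
    (S : ι × ι → Prop) (a b : {e // S e}) : 0 ≤ arcMatrix A S a b := by
  unfold arcMatrix
  split_ifs
  exacts [hA _ _, le_rfl]

variable [Fintype ι]

section Semiring

variable [Semiring R] {A : Matrix ι ι R} {S : ι × ι → Prop} [DecidablePred S]

theorem sum_arcMatrix_mul (hS : ∀ e, A e.1 e.2 ≠ 0 → S e) (a : {e // S e}) (f : ι → R) :
    ∑ c, arcMatrix A S a c * f c.1.2 = ∑ l, A a.1.2 l * f l := by
  let g : ι × ι → R := fun e => (if e.1 = a.1.2 then A a.1.2 e.2 else 0) * f e.2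
  have hg : ∀ e : {e // ¬ S e}, g e = 0 := fun ⟨e, he⟩ => by
    have hA0 : A e.1 e.2 = 0 := not_ne_iff.mp (mt (hS e) he)
    by_cases h : e.1 = a.1.2
    · simp only [g, ← h, hA0, ite_self, zero_mul]
    · simp only [g, if_neg h, zero_mul]
  calc ∑ c, arcMatrix A S a c * f c.1.2 = ∑ c : {e // S e}, g c := rfl
    _ = ∑ e, g e := by
      rw [← Fintype.sum_subtype_add_sum_subtype S g, Fintype.sum_eq_zero _ hg, add_zero]
    _ = ∑ l, A a.1.2 l * f l := by
      simp only [g, Fintype.sum_prod_type, ite_mul, zero_mul, Finset.sum_ite_irrel,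
        Finset.sum_const_zero, Finset.sum_ite_eq', Finset.mem_univ, if_true]

theorem arcMatrix_pow_succ_apply (hS : ∀ e, A e.1 e.2 ≠ 0 → S e) (m : ℕ)
    (a b : {e // S e}) :
    (arcMatrix A S ^ (m + 1)) a b = (A ^ m) a.1.2 b.1.1 * A b.1.1 b.1.2 := by
  induction m generalizing a with
  | zero =>
    by_cases h : b.1.1 = a.1.2
    · simp [arcMatrix, h]
    · simp [arcMatrix, h, one_apply_ne (Ne.symm h)]
  | succ m ih =>
    rw [pow_succ', mul_apply]
    simp only [ih]
    rw [sum_arcMatrix_mul hS a (fun l => (A ^ m) l b.1.1 * A b.1.1 b.1.2), pow_succ', mul_apply,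
      Finset.sum_mul]
    simp only [mul_assoc]

end Semiring

section Order

variable [Ring R] [LinearOrder R] [IsStrictOrderedRing R] {A : Matrix ι ι R}

theorem isPrimitive_arcMatrix_iff (hA : ∀ i j, 0 ≤ A i j) (hrow : ∀ i, ∃ j, 0 < A i j) :
    (arcMatrix A fun e => 0 < A e.1 e.2).IsPrimitive ↔ A.IsPrimitive := by
  have hS : ∀ e : ι × ι, A e.1 e.2 ≠ 0 → 0 < A e.1 e.2 := fun e h => (hA _ _).lt_of_ne' h
  constructor
  · rintro ⟨-, k, hk, hpos⟩
    obtain ⟨m, rfl⟩ := Nat.exists_eq_add_of_lt hk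
    refine ⟨hA, m + 1, m.succ_pos, fun i j => ?_⟩
    obtain ⟨l, hil⟩ := hrow i
    obtain ⟨l', hjl'⟩ := hrow j
    have hlj : 0 < (A ^ m) l j := by
      have := hpos ⟨(i, l), hil⟩ ⟨(j, l'), hjl'⟩
      rw [zero_add, arcMatrix_pow_succ_apply hS] at this
      exact pos_of_mul_pos_left this hjl'.le
    rw [pow_succ', mul_apply]
    exact Finset.sum_pos' (fun c _ => mul_nonneg (hA i c) (pow_apply_nonneg hA m c j))
      ⟨l, Finset.mem_univ _, mul_pos hil hlj⟩
  · rintro ⟨-, m, -, hpos⟩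
    refine ⟨arcMatrix_nonneg hA _, m + 1, m.succ_pos, fun a b => ?_⟩
    rw [arcMatrix_pow_succ_apply hS]
    exact mul_pos (hpos _ _) b.2

end Order

end Matrix

/-- `p` is primitive if and only if the restriction of `p̃` to the set of arcs
`E = {(i,j) : p i j > 0}` is primitive, where a nonnegative square matrix `M` is
primitive if there exists `m ≥ 1` such that every entry of `M ^ m` is positive. -/
theorem stmt_5 (n : ℕ)
    (p : Matrix (Fin n) (Fin n) ℝ)
    (hpnn : ∀ i j, 0 ≤ p i j) (hprow : ∀ i, ∑ j, p i j = 1)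
    (pt : Matrix (Fin n × Fin n) (Fin n × Fin n) ℝ)
    (hpt : ∀ i j k l, pt (i, j) (k, l) = if k = j then p j l else 0)
    (q : Matrix {e : Fin n × Fin n // 0 < p e.1 e.2}
                {e : Fin n × Fin n // 0 < p e.1 e.2} ℝ)
    (hq : ∀ a b, q a b = pt a.val b.val) :
    (∃ m : ℕ, 1 ≤ m ∧ ∀ i j : Fin n, 0 < (p ^ m) i j) ↔
      (∃ m : ℕ, 1 ≤ m ∧ ∀ a b : {e : Fin n × Fin n // 0 < p e.1 e.2},
        0 < (q ^ m) a b) := by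
  have hq_arc : q = Matrix.arcMatrix p fun e => 0 < p e.1 e.2 := by
    ext a b
    rw [hq, hpt]
    rfl
  have hrow : ∀ i, ∃ j, 0 < p i j := fun i => by
    simpa using Finset.exists_lt_of_sum_lt (f := fun _ => 0) (s := Finset.univ)
      (by simp [hprow i])
  subst hq_arc
  have h := Matrix.isPrimitive_arcMatrix_iff hpnn hrow
  exact ⟨fun hp => (h.2 ⟨hpnn, hp⟩).exists_pos_pow,
    fun hq => (h.1 ⟨Matrix.arcMatrix_nonneg hpnn _, hq⟩).exists_pos_pow⟩
end

section
/- The mean of the return-time distribution equals the reciprocal of the stationary probability of R (Kac's formula for a set): ∑_{k=1}^{∞} k · P(k) = 1 / ∑_{b∈R} π_b, where P(1) = ϖ_R Q_{RR} 𝟙 and P(k) = ϖ_R Q_{RS} (Q_{SS})^{k−2} Q_{SR} 𝟙 for k ≥ 2. -/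
/-!
Let `S` be the complement of `R`, `A = Q_SS`, and let `e 0 = 1`, `e (n + 1) = π_S A^n 𝟙`, the
`π`-probability of staying in `S` during times `0, …, n`. Stationarity restricted to `S` reads
`π_R Q_RS = π_S (I - A)`, and the rows of `Q` sum to one, so `π(R) P(k + 1)` is the second
difference `e k - 2 e (k + 1) + e (k + 2)`, which is therefore nonnegative. Summation by parts
turns `∑ (k + 1) (Δ² e) k` into `e 0 = 1` as soon as `n e n → 0`. This holds because, by
irreducibility, every state of `S` leaks into `R`: some power of the substochastic matrix `A` has
all row sums at most `ρ < 1`, so `e` decays geometrically.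
-/

open Finset Matrix Filter Topology

theorem le_pow_div_mul_of_add_le_mul {f : ℕ → ℝ} (hf : Antitone f) {M : ℕ} {ρ : ℝ}
    (hρ : 0 ≤ ρ) (hstep : ∀ n, f (n + M) ≤ ρ * f n) (n : ℕ) : f n ≤ ρ ^ (n / M) * f 0 := by
  have hgeom : ∀ q, f (M * q) ≤ ρ ^ q * f 0 := by
    intro q
    induction q with
    | zero => simp
    | succ q ih =>
      calc f (M * (q + 1)) = f (M * q + M) := by rw [mul_add_one]
        _ ≤ ρ * f (M * q) := hstep _
        _ ≤ ρ * (ρ ^ q * f 0) := by gcongr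
        _ = ρ ^ (q + 1) * f 0 := by ring
  exact (hf (Nat.mul_div_le n M)).trans (hgeom _)

theorem tendsto_succ_mul_of_antitone_of_add_le_mul {f : ℕ → ℝ} (hf : Antitone f)
    (hf0 : ∀ n, 0 ≤ f n) {M : ℕ} (hM : 0 < M) {ρ : ℝ} (hρ0 : 0 ≤ ρ) (hρ1 : ρ < 1)
    (hstep : ∀ n, f (n + M) ≤ ρ * f n) :
    Tendsto (fun n : ℕ => ((n : ℝ) + 1) * f n) atTop (𝓝 0) := by
  have hgeom : Tendsto (fun q : ℕ => M * f 0 * (((q : ℝ) + 1) * ρ ^ q)) atTop (𝓝 0) := by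
    have h := (tendsto_self_mul_const_pow_of_lt_one hρ0 hρ1).add
      (tendsto_pow_atTop_nhds_zero_of_lt_one hρ0 hρ1)
    simpa [add_mul] using h.const_mul ((M : ℝ) * f 0)
  refine squeeze_zero (fun n => mul_nonneg (by positivity) (hf0 n)) (fun n => ?_)
    (hgeom.comp (Nat.tendsto_div_const_atTop hM.ne'))
  have hn : (n : ℝ) + 1 ≤ M * ((n / M : ℕ) + 1) := by
    exact_mod_cast Nat.lt_mul_div_succ n hM
  calc ((n : ℝ) + 1) * f n ≤ (M * ((n / M : ℕ) + 1)) * (ρ ^ (n / M) * f 0) :=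
        mul_le_mul hn (le_pow_div_mul_of_add_le_mul hf hρ0 hstep n) (hf0 n) (by positivity)
    _ = M * f 0 * (((n / M : ℕ) + 1) * ρ ^ (n / M)) := by ring

theorem hasSum_succ_mul_secondDiff {e : ℕ → ℝ}
    (hconv : ∀ k, 0 ≤ e k - 2 * e (k + 1) + e (k + 2))
    (hlim : Tendsto (fun n : ℕ => (n : ℝ) * e n) atTop (𝓝 0)) :
    HasSum (fun k : ℕ => ((k : ℝ) + 1) * (e k - 2 * e (k + 1) + e (k + 2))) (e 0) := by
  have hpartial : ∀ N, ∑ k ∈ range N, ((k : ℝ) + 1) * (e k - 2 * e (k + 1) + e (k + 2))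
      = e 0 - (N * e N + e N) + ((N + 1) * e (N + 1) - e (N + 1)) := by
    intro N
    induction N with
    | zero => simp
    | succ N ih => rw [sum_range_succ, ih]; push_cast; ring
  have hshift : Tendsto (fun n : ℕ => ((n : ℝ) + 1) * e (n + 1)) atTop (𝓝 0) := by
    simpa using (tendsto_add_atTop_iff_nat 1).2 hlim
  have he : Tendsto e atTop (𝓝 0) := by
    refine (tendsto_add_atTop_iff_nat 1).1 ?_
    have h := hshift.mul tendsto_one_div_add_atTop_nhds_zero_nat
    rw [mul_zero] at h
    refine h.congr fun n => ?_
    field_simp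
  rw [hasSum_iff_tendsto_nat_of_nonneg fun k => mul_nonneg (by positivity) (hconv k)]
  simp only [hpartial]
  simpa using tendsto_const_nhds.sub (hlim.add he) |>.add
    (hshift.sub ((tendsto_add_atTop_iff_nat 1).2 he))

namespace Matrix

theorem mulVec_nonneg_of_nonneg {α β : Type*} [Fintype β] {A : Matrix α β ℝ}
    (hA : ∀ i j, 0 ≤ A i j) {v : β → ℝ} (hv : 0 ≤ v) : 0 ≤ A *ᵥ v :=
  fun i => sum_nonneg fun j _ => mul_nonneg (hA i j) (hv j)

theorem vecMul_nonneg_of_nonneg {α β : Type*} [Fintype α] {A : Matrix α β ℝ}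
    (hA : ∀ i j, 0 ≤ A i j) {v : α → ℝ} (hv : 0 ≤ v) : 0 ≤ v ᵥ* A :=
  fun j => sum_nonneg fun i _ => mul_nonneg (hv i) (hA i j)

theorem mulVec_mono_of_nonneg {α β : Type*} [Fintype β] {A : Matrix α β ℝ}
    (hA : ∀ i j, 0 ≤ A i j) {v w : β → ℝ} (hvw : v ≤ w) : A *ᵥ v ≤ A *ᵥ w := by
  have h := mulVec_nonneg_of_nonneg hA (sub_nonneg.2 hvw)
  rwa [mulVec_sub, sub_nonneg] at h

theorem vecMul_toBlock_add_vecMul_toBlock {ι κ R : Type*} [Fintype ι]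
    [NonUnitalNonAssocSemiring R] (v : ι → R) (M : Matrix ι κ R) (p : ι → Prop)
    [DecidablePred p] (q : κ → Prop) :
    (fun i : {i // p i} => v i) ᵥ* M.toBlock p q
      + (fun i : {i // ¬p i} => v i) ᵥ* M.toBlock (fun i => ¬p i) q
      = fun j : {j // q j} => (v ᵥ* M) j := by
  ext j
  exact Fintype.sum_subtype_add_sum_subtype p fun i => v i * M i j

theorem toBlock_mulVec_add_toBlock_mulVec {ι κ R : Type*} [Fintype κ]
    [NonUnitalNonAssocSemiring R] (M : Matrix ι κ R) (v : κ → R) (p : ι → Prop)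
    (q : κ → Prop) [DecidablePred q] :
    M.toBlock p q *ᵥ (fun j : {j // q j} => v j)
      + M.toBlock p (fun j => ¬q j) *ᵥ (fun j : {j // ¬q j} => v j)
      = fun i : {i // p i} => (M *ᵥ v) i := by
  ext i
  exact Fintype.sum_subtype_add_sum_subtype q fun j => M i j * v j

theorem toBlock_mulVec_one_eq_one_sub {κ : Type*} [Fintype κ] [DecidableEq κ]
    {M : Matrix κ κ ℝ} (hM : M ∈ rowStochastic ℝ κ) (p q : κ → Prop) [DecidablePred q] :
    M.toBlock p q *ᵥ 1 = 1 - M.toBlock p (fun j => ¬q j) *ᵥ 1 := by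
  have h := toBlock_mulVec_add_toBlock_mulVec M 1 p q
  rw [hM.2] at h
  exact eq_sub_of_add_eq h

variable {ι : Type*} [Fintype ι] [DecidableEq ι]

theorem pow_toBlock_apply_le {Q : Matrix ι ι ℝ} (hQ : ∀ i j, 0 ≤ Q i j)
    (p : ι → Prop) [DecidablePred p] (n : ℕ) (a b : {i // p i}) :
    (Q.toBlock p p ^ n) a b ≤ (Q ^ n) a b := by
  induction n generalizing b with
  | zero => by_cases h : a = b <;> simp [h, Subtype.val_injective.ne]
  | succ n ih =>
    rw [pow_succ, pow_succ, mul_apply, mul_apply]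
    calc ∑ c, (Q.toBlock p p ^ n) a c * Q.toBlock p p c b
        ≤ ∑ c : {i // p i}, (Q ^ n) a c * Q c b :=
          sum_le_sum fun c _ => mul_le_mul_of_nonneg_right (ih c) (hQ c b)
      _ ≤ ∑ k, (Q ^ n) a k * Q k b := by
          rw [← Fintype.sum_subtype_add_sum_subtype p]
          exact le_add_of_nonneg_right <| sum_nonneg fun k _ =>
            mul_nonneg (pow_apply_nonneg hQ n _ _) (hQ _ _)

theorem pow_toBlock_mulVec_one_lt {Q : Matrix ι ι ℝ} (hQ : Q ∈ rowStochastic ℝ ι)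
    (p : ι → Prop) [DecidablePred p] {m : ℕ} {s : {i // p i}} {r : ι} (hr : ¬p r)
    (hsr : 0 < (Q ^ m) s r) :
    (Q.toBlock p p ^ m *ᵥ 1) s < 1 := by
  have hQm := pow_mem hQ m
  calc (Q.toBlock p p ^ m *ᵥ 1) s = ∑ b, (Q.toBlock p p ^ m) s b := by
        simp [mulVec, dotProduct]
    _ ≤ ∑ b : {i // p i}, (Q ^ m) s b := sum_le_sum fun b _ =>
        pow_toBlock_apply_le (fun _ _ => nonneg_of_mem_rowStochastic hQ) p m s b
    _ < ∑ b : {i // p i}, (Q ^ m) s b + ∑ b : {i // ¬p i}, (Q ^ m) s b :=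
        lt_add_of_pos_right _ <| sum_pos' (fun b _ => nonneg_of_mem_rowStochastic hQm)
          ⟨⟨r, hr⟩, mem_univ _, hsr⟩
    _ = 1 := by
        rw [Fintype.sum_subtype_add_sum_subtype p fun j => (Q ^ m) s j]
        exact sum_row_of_mem_rowStochastic hQm s

section Substochastic

variable {A : Matrix ι ι ℝ} (hA : ∀ i j, 0 ≤ A i j) (hA1 : A *ᵥ 1 ≤ 1)
include hA hA1

theorem antitone_pow_mulVec_one : Antitone fun n : ℕ => A ^ n *ᵥ 1 := by
  refine antitone_nat_of_succ_le fun n => ?_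
  rw [pow_succ, ← mulVec_mulVec]
  exact mulVec_mono_of_nonneg (pow_apply_nonneg hA n) hA1

theorem exists_pow_mulVec_one_le_smul_one (hleak : ∀ i, ∃ m, (A ^ m *ᵥ 1) i < 1) :
    ∃ M, 0 < M ∧ ∃ ρ : ℝ, 0 ≤ ρ ∧ ρ < 1 ∧ A ^ M *ᵥ 1 ≤ ρ • 1 := by
  choose m hm using hleak
  set M := univ.sup m + 1
  have hlt : ∀ i, (A ^ M *ᵥ 1) i < 1 := fun i =>
    (antitone_pow_mulVec_one hA hA1 ((le_sup (mem_univ i)).trans (Nat.le_succ _)) i).trans_lt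
      (hm i)
  obtain ⟨⟨ρ, hρ0, hρ1⟩, hρ⟩ := Finite.exists_le fun i =>
    (⟨max 0 ((A ^ M *ᵥ 1) i), le_max_left _ _, max_lt one_pos (hlt i)⟩ : Set.Ico (0 : ℝ) 1)
  exact ⟨M, Nat.succ_pos _, ρ, hρ0, hρ1, fun i => by simpa using (le_max_right _ _).trans (hρ i)⟩

theorem tendsto_succ_mul_dotProduct_pow_mulVec_one (hleak : ∀ i, ∃ m, (A ^ m *ᵥ 1) i < 1)
    {v : ι → ℝ} (hv : 0 ≤ v) :
    Tendsto (fun n : ℕ => ((n : ℝ) + 1) * (v ⬝ᵥ (A ^ n *ᵥ 1))) atTop (𝓝 0) := by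
  obtain ⟨M, hM, ρ, hρ0, hρ1, hρ⟩ := exists_pow_mulVec_one_le_smul_one hA hA1 hleak
  refine tendsto_succ_mul_of_antitone_of_add_le_mul
    (fun m n hmn => dotProduct_le_dotProduct_of_nonneg_left
      (antitone_pow_mulVec_one hA hA1 hmn) hv)
    (fun n => dotProduct_nonneg_of_nonneg hv
      (mulVec_nonneg_of_nonneg (pow_apply_nonneg hA n) zero_le_one))
    hM hρ0 hρ1 fun n => ?_
  calc v ⬝ᵥ (A ^ (n + M) *ᵥ 1) = v ⬝ᵥ (A ^ n *ᵥ (A ^ M *ᵥ 1)) := by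
        rw [pow_add, mulVec_mulVec]
    _ ≤ v ⬝ᵥ (A ^ n *ᵥ (ρ • 1)) :=
        dotProduct_le_dotProduct_of_nonneg_left
          (mulVec_mono_of_nonneg (pow_apply_nonneg hA n) hρ) hv
    _ = ρ * (v ⬝ᵥ (A ^ n *ᵥ 1)) := by rw [mulVec_smul, dotProduct_smul, smul_eq_mul]

end Substochastic

end Matrix

section Kac

variable {ι : Type*} [Fintype ι] [DecidableEq ι] (p : ι → Prop) [DecidablePred p]
  (Q : Matrix ι ι ℝ) (π : ι → ℝ)

def avoidProb : ℕ → ℝ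
  | 0 => 1
  | n + 1 =>
    (fun i : {i // ¬p i} => π i) ⬝ᵥ (Q.toBlock (fun i => ¬p i) (fun i => ¬p i) ^ n *ᵥ 1)

/-- `returnWeight p Q π k` is `π(R) P(k + 1)`, where `R = {p}`. -/
def returnWeight : ℕ → ℝ
  | 0 => ((fun i : {i // p i} => π i) ᵥ* Q.toBlock p p) ⬝ᵥ 1
  | k + 1 => ((fun i : {i // p i} => π i) ᵥ* (Q.toBlock p (fun i => ¬p i)
      * Q.toBlock (fun i => ¬p i) (fun i => ¬p i) ^ k * Q.toBlock (fun i => ¬p i) p)) ⬝ᵥ 1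

theorem returnWeight_succ (k : ℕ) :
    returnWeight p Q π (k + 1) = ((fun i : {i // p i} => π i) ᵥ* Q.toBlock p (fun i => ¬p i))
      ⬝ᵥ (Q.toBlock (fun i => ¬p i) (fun i => ¬p i) ^ k *ᵥ (Q.toBlock (fun i => ¬p i) p *ᵥ 1)) := by
  simp only [returnWeight, dotProduct_mulVec, vecMul_vecMul, Matrix.mul_assoc]

variable {p Q π}

theorem returnWeight_nonneg (hQ : ∀ i j, 0 ≤ Q i j) (hπ : 0 ≤ π) (k : ℕ) :
    0 ≤ returnWeight p Q π k := by
  have hblock : ∀ (q r : ι → Prop), ∀ i j, 0 ≤ Q.toBlock q r i j := fun _ _ i j => hQ i j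
  cases k with
  | zero =>
    exact dotProduct_nonneg_of_nonneg (vecMul_nonneg_of_nonneg (hblock _ _) fun i => hπ i)
      zero_le_one
  | succ k =>
    rw [returnWeight_succ]
    exact dotProduct_nonneg_of_nonneg (vecMul_nonneg_of_nonneg (hblock _ _) fun i => hπ i)
      (mulVec_nonneg_of_nonneg (pow_apply_nonneg (hblock _ _) k)
        (mulVec_nonneg_of_nonneg (hblock _ _) zero_le_one))

theorem avoidProb_succ_sub_avoidProb_succ_succ (hπ : π ᵥ* Q = π) (n : ℕ) :
    avoidProb p Q π (n + 1) - avoidProb p Q π (n + 2) =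
      ((fun i : {i // p i} => π i) ᵥ* Q.toBlock p (fun i => ¬p i))
        ⬝ᵥ (Q.toBlock (fun i => ¬p i) (fun i => ¬p i) ^ n *ᵥ 1) := by
  have hstat := vecMul_toBlock_add_vecMul_toBlock π Q p (fun i => ¬p i)
  rw [hπ] at hstat
  rw [eq_sub_of_add_eq hstat, sub_dotProduct, ← dotProduct_mulVec, mulVec_mulVec, ← pow_succ']
  rfl

theorem returnWeight_eq_avoidProb (hQ : Q ∈ rowStochastic ℝ ι) (hπ : π ᵥ* Q = π)
    (hπ1 : ∑ i, π i = 1) (k : ℕ) :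
    returnWeight p Q π k =
      avoidProb p Q π k - 2 * avoidProb p Q π (k + 1) + avoidProb p Q π (k + 2) := by
  have hdiff := avoidProb_succ_sub_avoidProb_succ_succ (p := p) hπ
  cases k with
  | zero =>
    have hmass : (fun i : {i // p i} => π i) ⬝ᵥ 1 = avoidProb p Q π 0 - avoidProb p Q π 1 := by
      simp only [avoidProb, pow_zero, one_mulVec, dotProduct_one]
      linarith [Fintype.sum_subtype_add_sum_subtype p π]
    have h0 := hdiff 0
    rw [pow_zero, one_mulVec] at h0
    rw [returnWeight, ← dotProduct_mulVec, toBlock_mulVec_one_eq_one_sub hQ, dotProduct_sub,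
      dotProduct_mulVec, ← h0, hmass]
    ring
  | succ k =>
    rw [returnWeight_succ, toBlock_mulVec_one_eq_one_sub hQ, mulVec_sub, dotProduct_sub,
      mulVec_mulVec, ← pow_succ, ← hdiff, ← hdiff]
    ring

theorem tendsto_natCast_mul_avoidProb (hQ : Q ∈ rowStochastic ℝ ι)
    (hirr : ∀ i j, ∃ m, 0 < (Q ^ m) i j) {r : ι} (hr : p r) (hπ : 0 ≤ π) :
    Tendsto (fun n : ℕ => (n : ℝ) * avoidProb p Q π n) atTop (𝓝 0) := by
  have hA : ∀ i j, 0 ≤ Q.toBlock (fun i => ¬p i) (fun i => ¬p i) i j :=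
    fun _ _ => nonneg_of_mem_rowStochastic hQ
  have hA1 : Q.toBlock (fun i => ¬p i) (fun i => ¬p i) *ᵥ 1 ≤ 1 := by
    rw [toBlock_mulVec_one_eq_one_sub hQ]
    exact sub_le_self _ (mulVec_nonneg_of_nonneg (fun _ _ => nonneg_of_mem_rowStochastic hQ)
      zero_le_one)
  have hleak (s : {i // ¬p i}) :
      ∃ m, (Q.toBlock (fun i => ¬p i) (fun i => ¬p i) ^ m *ᵥ 1) s < 1 :=
    (hirr s r).imp fun _ => pow_toBlock_mulVec_one_lt hQ _ (not_not.2 hr)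
  rw [← tendsto_add_atTop_iff_nat 1]
  simpa [avoidProb] using
    tendsto_succ_mul_dotProduct_pow_mulVec_one hA hA1 hleak fun i : {i // ¬p i} => hπ i

end Kac

theorem stmt_18_general {ι : Type*} [Fintype ι] [DecidableEq ι]
    (rp : ι → Prop) [DecidablePred rp]
    (hR : Nonempty {i // rp i})
    (Q : Matrix ι ι ℝ)
    (hQnn : ∀ i j, 0 ≤ Q i j) (hQrow : ∀ i, ∑ j, Q i j = 1)
    (hirr : ∀ i j, ∃ m : ℕ, 1 ≤ m ∧ 0 < (Q ^ m) i j)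
    (π : ι → ℝ) (hπnn : ∀ i, 0 ≤ π i) (hπsum : ∑ i, π i = 1)
    (hπstat : ∀ j, ∑ i, π i * Q i j = π j)
    (QRR : Matrix {i // rp i} {i // rp i} ℝ)
    (hQRR : ∀ a b, QRR a b = Q a.val b.val)
    (QRS : Matrix {i // rp i} {i // ¬ rp i} ℝ)
    (hQRS : ∀ a b, QRS a b = Q a.val b.val)
    (QSR : Matrix {i // ¬ rp i} {i // rp i} ℝ)
    (hQSR : ∀ a b, QSR a b = Q a.val b.val)
    (QSS : Matrix {i // ¬ rp i} {i // ¬ rp i} ℝ)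
    (hQSS : ∀ a b, QSS a b = Q a.val b.val)
    (ϖ : {i // rp i} → ℝ)
    (hϖ : ∀ b, ϖ b = π b.val / ∑ b' : {i // rp i}, π b'.val)
    (P : ℕ → ℝ)
    (hP1 : P 1 = ∑ b, Matrix.vecMul ϖ QRR b)
    (hPk : ∀ k, 2 ≤ k → P k = ∑ b, Matrix.vecMul ϖ (QRS * QSS ^ (k - 2) * QSR) b) :
    HasSum (fun k : ℕ => ((k : ℝ) + 1) * P (k + 1))
      (1 / ∑ b : {i // rp i}, π b.val) := by
  obtain ⟨r⟩ := hR
  obtain rfl : QRR = Q.toBlock rp rp := Matrix.ext hQRR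
  obtain rfl : QRS = Q.toBlock rp (fun i => ¬rp i) := Matrix.ext hQRS
  obtain rfl : QSR = Q.toBlock (fun i => ¬rp i) rp := Matrix.ext hQSR
  obtain rfl : QSS = Q.toBlock (fun i => ¬rp i) (fun i => ¬rp i) := Matrix.ext hQSS
  have hQ : Q ∈ rowStochastic ℝ ι := mem_rowStochastic_iff_sum.2 ⟨hQnn, hQrow⟩
  have hπ : π ᵥ* Q = π := funext hπstat
  have hirr' : ∀ i j, ∃ m, 0 < (Q ^ m) i j := fun i j => (hirr i j).imp fun _ => And.right
  set c := ∑ b : {i // rp i}, π b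
  have hϖ' : ϖ = c⁻¹ • fun b : {i // rp i} => π b :=
    funext fun b => (hϖ b).trans (div_eq_inv_mul _ _)
  have hP : ∀ k, P (k + 1) = c⁻¹ * returnWeight rp Q π k := by
    rintro (_ | k)
    · simp only [hP1, hϖ', returnWeight, smul_vecMul, dotProduct_one, Pi.smul_apply, smul_eq_mul,
        mul_sum]
    · simp only [hPk (k + 2) (by omega), hϖ', returnWeight, smul_vecMul, dotProduct_one,
        Pi.smul_apply, smul_eq_mul, mul_sum, Nat.add_sub_cancel]
  have hweight := returnWeight_eq_avoidProb (p := rp) hQ hπ hπsum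
  have hsum := hasSum_succ_mul_secondDiff
    (fun k => hweight k ▸ returnWeight_nonneg hQnn hπnn k)
    (tendsto_natCast_mul_avoidProb hQ hirr' r.2 hπnn)
  simp only [← hweight] at hsum
  simpa [hP, mul_left_comm, avoidProb] using hsum.mul_left c⁻¹

/-- Kac's formula for a set: the mean of the return-time distribution
`P 1 = ϖ_R Q_RR 𝟙`, `P k = ϖ_R Q_RS (Q_SS)^(k-2) Q_SR 𝟙` (`k ≥ 2`) equals the
reciprocal of the stationary probability of `R`:
`∑_{k≥1} k * P k = 1 / ∑_{b ∈ R} π b`. -/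
theorem stmt_18 {ι : Type*} [Fintype ι] [DecidableEq ι]
    (rp : ι → Prop) [DecidablePred rp]
    (hR : Nonempty {i // rp i}) (hS : Nonempty {i // ¬ rp i})
    (Q : Matrix ι ι ℝ)
    (hQnn : ∀ i j, 0 ≤ Q i j) (hQrow : ∀ i, ∑ j, Q i j = 1)
    (hirr : ∀ i j, ∃ m : ℕ, 1 ≤ m ∧ 0 < (Q ^ m) i j)
    (π : ι → ℝ) (hπnn : ∀ i, 0 ≤ π i) (hπsum : ∑ i, π i = 1)
    (hπstat : ∀ j, ∑ i, π i * Q i j = π j)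
    (QRR : Matrix {i // rp i} {i // rp i} ℝ)
    (hQRR : ∀ a b, QRR a b = Q a.val b.val)
    (QRS : Matrix {i // rp i} {i // ¬ rp i} ℝ)
    (hQRS : ∀ a b, QRS a b = Q a.val b.val)
    (QSR : Matrix {i // ¬ rp i} {i // rp i} ℝ)
    (hQSR : ∀ a b, QSR a b = Q a.val b.val)
    (QSS : Matrix {i // ¬ rp i} {i // ¬ rp i} ℝ)
    (hQSS : ∀ a b, QSS a b = Q a.val b.val)
    (ϖ : {i // rp i} → ℝ)
    (hϖ : ∀ b, ϖ b = π b.val / ∑ b' : {i // rp i}, π b'.val)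
    (P : ℕ → ℝ)
    (hP1 : P 1 = ∑ b, Matrix.vecMul ϖ QRR b)
    (hPk : ∀ k, 2 ≤ k → P k = ∑ b, Matrix.vecMul ϖ (QRS * QSS ^ (k - 2) * QSR) b) :
    HasSum (fun k : ℕ => ((k : ℝ) + 1) * P (k + 1))
      (1 / ∑ b : {i // rp i}, π b.val) :=
  stmt_18_general rp hR Q hQnn hQrow hirr π hπnn hπsum hπstat QRR hQRR QRS hQRS QSR hQSR QSS hQSS ϖ
    hϖ P hP1 hPk
end
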